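/- The (promise-free) GHZ game is non-signaling: there exists a strategy solving it with probability 1 whose S-marginals depend only on the inputs of the players in S, for every subset S of the three players (for inputs with x ⊕ y ⊕ z = 0 one may take the uniform distribution over the four output triples (a,b,c) with a ⊕ b ⊕ c = x ∨ y ∨ z, and for the remaining inputs the uniform distribution over all eight output triples). -/

import Mathlib

/-!
Take for `ρ x` the uniform distribution on the four output triples of parity `x 0 || x 1 || x 2`;
it wins on every input. Flipping the output of a player `i` is a bijection between the triples
of either parity, and it does not change what the players other than `i` see. Hence the marginal
on any proper subset of the players is the same for both parities, while the marginal on all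
three players is a function of the whole input anyway.
-/

namespace PMF

variable {α β : Type*}

theorem map_uniformOfFinset_equiv (e : α ≃ β) (s : Finset α) (hs : s.Nonempty) :
    (uniformOfFinset s hs).map e = uniformOfFinset (s.map e.toEmbedding) (hs.map) := by
  ext b
  rw [map_apply, tsum_eq_single (e.symm b) fun a ha => if_neg fun h => ha (by simp [h])]
  by_cases hb : e.symm b ∈ s <;> simp [hb, Finset.mem_map_equiv]

theorem map_uniformOfFinset_eq_of_equiv {s t : Finset α} (hs : s.Nonempty) (ht : t.Nonempty)
    (e : α ≃ α) (hst : s.map e.toEmbedding = t) (g : α → β) (hg : g ∘ e = g) :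
    (uniformOfFinset s hs).map g = (uniformOfFinset t ht).map g := by
  subst hst
  conv_lhs => rw [← hg]
  rw [← map_comp, map_uniformOfFinset_equiv]

end PMF

section Flip

variable {ι : Type*} [DecidableEq ι]

def flipAt (i : ι) : Equiv.Perm (ι → Bool) :=
  Function.Involutive.toPerm (fun y => Function.update y i (!y i)) fun y => by simp

theorem flipAt_symm (i : ι) : (flipAt i).symm = flipAt i :=
  Function.Involutive.toPerm_symm _

theorem restrict_flipAt_of_notMem {T : Set ι} {i : ι} (hi : i ∉ T) (y : ι → Bool) :
    T.restrict (flipAt i y) = T.restrict y := by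
  funext ⟨j, hj⟩
  exact Function.update_of_ne (ne_of_mem_of_not_mem hj hi) _ _

end Flip

def ghzParity (y : Fin 3 → Bool) : Bool :=
  Bool.xor (y 0) (Bool.xor (y 1) (y 2))

theorem ghzParity_flipAt (i : Fin 3) (y : Fin 3 → Bool) :
    ghzParity (flipAt i y) = !ghzParity y := by
  revert i y
  decide

noncomputable def uniformOfParity (c : Bool) : PMF (Fin 3 → Bool) :=
  PMF.uniformOfFinset {y | ghzParity y = c} ⟨![c, false, false], by cases c <;> decide⟩

theorem mem_support_uniformOfParity {c : Bool} {y : Fin 3 → Bool} :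
    y ∈ (uniformOfParity c).support ↔ ghzParity y = c :=
  (PMF.mem_support_uniformOfFinset_iff _ _).trans (by simp)

theorem map_restrict_uniformOfParity {T : Set (Fin 3)} {i : Fin 3} (hi : i ∉ T) (c c' : Bool) :
    (uniformOfParity c).map T.restrict = (uniformOfParity c').map T.restrict := by
  suffices ∀ c, (uniformOfParity c).map T.restrict = (uniformOfParity (!c)).map T.restrict by
    cases c <;> cases c' <;> first | rfl | exact this _
  intro c
  refine PMF.map_uniformOfFinset_eq_of_equiv _ _ (flipAt i) ?_ _
    (funext (restrict_flipAt_of_notMem hi))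
  ext y
  simp [Finset.mem_map_equiv, flipAt_symm, ghzParity_flipAt]

theorem ghz_nonsignaling :
    ∃ ρ : (Fin 3 → Bool) → PMF (Fin 3 → Bool),
      (∀ x : Fin 3 → Bool, ∀ y ∈ (ρ x).support,
          Bool.xor (x 0) (Bool.xor (x 1) (x 2)) = false →
            Bool.xor (y 0) (Bool.xor (y 1) (y 2)) = (x 0 || x 1 || x 2)) ∧
      (∀ (T : Set (Fin 3)) (x x' : Fin 3 → Bool),
          (∀ i ∈ T, x i = x' i) →
          (ρ x).map T.restrict = (ρ x').map T.restrict) := by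
  refine ⟨fun x => uniformOfParity (x 0 || x 1 || x 2), fun x y hy _ => ?_, fun T x x' hxx' => ?_⟩
  · exact mem_support_uniformOfParity.mp hy
  · by_cases hT : ∀ i, i ∈ T
    · rw [funext fun i => hxx' i (hT i)]
    · obtain ⟨i, hi⟩ := not_forall.mp hT
      exact map_restrict_uniformOfParity hi _ _
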